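/- Let K be arbitrary. Suppose a labeled graph contains none of the following three structures: (1) an M-color node with M ≥ 4; (2) a 3-color node joined by an edge to a node whose incident edges carry at least 2 distinct labels; (3) a normal 2-color node joined by an edge to a 2-color node whose color set differs from its own. Suppose moreover that for every internal edge of the graph, every residing path of that edge contains at least one 1-color node (this holds vacuously when there are no internal edges). Then for every prime p with p > 4·|E|, where |E| is the number of edges, there exists a storage code with source alphabet S = (Fin 4 → ZMod p) and coded alphabet T = (Fin 3 → ZMod p); in particular symbol rate 4/3 is achievable over such graphs. -/

import Mathlib

/-- A storage code problem over a labeled graph: `N` nodes, `K` sources, and a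
symmetric labeling `t` of pairs of nodes by sources, with no self-loops. -/
structure LabeledGraph (N K : ℕ) where
  t : Fin N → Fin N → Option (Fin K)
  symm : ∀ i j, t i j = t j i
  irrefl : ∀ i, t i i = none

/-- `V` is a storage code over `G`: from the coded symbols at the two endpoints of
any `W_k`-edge, the source symbol `W_k` can be decoded. -/
def IsStorageCode {N K : ℕ} (G : LabeledGraph N K) (S T : Type)
    (V : Fin N → (Fin K → S) → T) : Prop :=
  ∀ i j k, G.t i j = some k →
    ∃ D : T → T → S, ∀ w : Fin K → S, D (V i w) (V j w) = w k

/-- The set of source labels carried by the edges incident to node `i`. -/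
def colorSet {N K : ℕ} (G : LabeledGraph N K) (i : Fin N) : Set (Fin K) :=
  {k | ∃ j, G.t i j = some k}

/-- Node `i` is `M`-color: its incident edges carry exactly `M` distinct labels. -/
def IsMColor {N K : ℕ} (G : LabeledGraph N K) (i : Fin N) (M : ℕ) : Prop :=
  (colorSet G i).ncard = M
/-- A `W_k`-path: a sequence of `P ≥ 1` consecutive `W_k`-edges whose unordered
edges are pairwise distinct. -/
def IsPath {N K : ℕ} (G : LabeledGraph N K) (k : Fin K) (P : ℕ)
    (v : Fin (P + 1) → Fin N) : Prop :=
  1 ≤ P ∧ (∀ q : Fin P, G.t (v q.castSucc) (v q.succ) = some k) ∧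
    Function.Injective (fun q : Fin P => s(v q.castSucc, v q.succ))
/-- A special `2`-color node: for one of its two colors `k`, every node joined to it
by a `W_k`-edge is `1`-color. -/
def IsSpecial2Color {N K : ℕ} (G : LabeledGraph N K) (i : Fin N) : Prop :=
  IsMColor G i 2 ∧ ∃ k ∈ colorSet G i, ∀ j, G.t i j = some k → IsMColor G j 1

/-- A normal `2`-color node: a `2`-color node that is not special. -/
def IsNormal2Color {N K : ℕ} (G : LabeledGraph N K) (i : Fin N) : Prop :=
  IsMColor G i 2 ∧ ¬ IsSpecial2Color G i
/-- The number of (unordered) edges of the labeled graph. -/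
noncomputable def edgeCount {N K : ℕ} (G : LabeledGraph N K) : ℕ :=
  {e : Sym2 (Fin N) | ∃ i j, e = s(i, j) ∧ G.t i j ≠ none}.ncard

/-!
Every node stores linear combinations of the sources `W_k = x ∈ F⁴` on its edges, with a node
coefficient `α = a i` and, at a `2`-color node, a coefficient `Λ_{i,k} = sideCoeff` shared by the
whole component of `i` in the graph of `2`-`2` edges of its other color. A `1`-color node stores
`x₁, x₂, x₀ + α x₃`, a `3`-color node `x₀ + α x₃`, and a `2`-color node either the
pencil `(x₀ + Λ x₂, x₁ + Λ x₃)` or the mixed form `(x₀ + Λ x₂) + α (x₁ + Λ x₃)`.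

The code is linear, so it suffices that a source tuple invisible at both ends of a `W_k`-edge has
`w_k = 0`. The two ends always give two relations `u + λ v = 0`, `u + μ v = 0` on the same pair of
coordinate vectors, with `λ ≠ μ`: from injectivity of `a`, from the choice of `a` (a scaled
injective map avoiding at most `2|E| + 1` values, possible when `p > 4|E|`), or, on a `2`-`2`
edge, because its ends lie in different components of the other color: a path joining them
there would be a residing path without a `1`-color node.
-/

section rank

variable {α : Type*} [LinearOrder α] {s : Set α}

lemma ncard_inter_Iio_lt_ncard (hs : s.Finite) {a : α} (ha : a ∈ s) :
    (s ∩ Set.Iio a).ncard < s.ncard :=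
  Set.ncard_lt_ncard (Set.inter_subset_left.ssubset_of_not_subset
    fun h => lt_irrefl a (h ha).2) hs

lemma strictMonoOn_ncard_inter_Iio (hs : s.Finite) :
    StrictMonoOn (fun a => (s ∩ Set.Iio a).ncard) s := fun a ha _ _ hab =>
  Set.ncard_lt_ncard
    ((Set.inter_subset_inter_right _ (Set.Iio_subset_Iio hab.le)).ssubset_of_not_subset
      fun h => lt_irrefl a (h ⟨ha, hab⟩).2) (hs.inter_of_left _)

end rank

section linearAlgebra

variable {F : Type*} [Field F]

lemma eq_zero_of_add_mul_eq_zero {u v α β : F} (hα : u + α * v = 0) (hβ : u + β * v = 0)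
    (hne : α ≠ β) : u = 0 ∧ v = 0 := by
  have hv : v = 0 := by
    have : (α - β) * v = 0 := by linear_combination hα - hβ
    exact (mul_eq_zero.mp this).resolve_left (sub_ne_zero.mpr hne)
  exact ⟨by simpa [hv] using hα, hv⟩

lemma fin4_eq_zero_of_add_mul_eq_zero {x : Fin 4 → F} {α β : F} (h1 : x 1 = 0) (h2 : x 2 = 0)
    (hα : x 0 + α * x 3 = 0) (hβ : x 0 + β * x 3 = 0) (hne : α ≠ β) : x = 0 := by
  obtain ⟨h0, h3⟩ := eq_zero_of_add_mul_eq_zero hα hβ hne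
  ext r; fin_cases r <;> assumption

lemma fin4_eq_zero_of_pencil {x : Fin 4 → F} {α β : F}
    (hα₀ : x 0 + α * x 2 = 0) (hα₁ : x 1 + α * x 3 = 0)
    (hβ₀ : x 0 + β * x 2 = 0) (hβ₁ : x 1 + β * x 3 = 0) (hne : α ≠ β) : x = 0 := by
  obtain ⟨h0, h2⟩ := eq_zero_of_add_mul_eq_zero hα₀ hβ₀ hne
  obtain ⟨h1, h3⟩ := eq_zero_of_add_mul_eq_zero hα₁ hβ₁ hne
  ext r; fin_cases r <;> assumption

end linearAlgebra

lemma Set.Finite.exists_injOn_ne_zero {ι F : Type*} [Zero F] [Finite F] {s : Set ι}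
    (hs : s.Finite) (hcard : s.ncard < Nat.card F) :
    ∃ f : ι → F, Set.InjOn f s ∧ ∀ i ∈ s, f i ≠ 0 := by
  have hle : s.encard ≤ ({0}ᶜ : Set F).encard := by
    rw [← hs.cast_ncard_eq, ← (Set.toFinite _).cast_ncard_eq, Set.ncard_compl,
      Set.ncard_singleton]
    exact_mod_cast (by omega)
  obtain ⟨f, hmaps, hinj⟩ := hs.exists_injOn_of_encard_le hle
  exact ⟨f, hinj, fun i hi => hmaps hi⟩

lemma isStorageCode_of_ker {N K : ℕ} {S T : Type} [AddGroup S] [AddGroup T]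
    (G : LabeledGraph N K) (V : Fin N → (Fin K → S) →+ T)
    (h : ∀ i j k, G.t i j = some k → ∀ w, V i w = 0 → V j w = 0 → w k = 0) :
    IsStorageCode G S T fun i => V i := by
  intro i j k hij
  have hfac : Function.FactorsThrough (fun w : Fin K → S => w k) fun w => (V i w, V j w) := by
    intro w w' hww'
    simp only [Prod.mk.injEq] at hww'
    have := h i j k hij (w - w') (by simp [hww'.1]) (by simp [hww'.2])
    exact sub_eq_zero.mp this
  exact ⟨fun u v => Function.extend (fun w => (V i w, V j w)) (fun w => w k) 0 (u, v),
    hfac.extend_apply 0⟩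

namespace LabeledGraph

open Finset

variable {N K : ℕ} (G : LabeledGraph N K)

lemma ne_of_t_eq_some {i j : Fin N} {k : Fin K} (h : G.t i j = some k) : i ≠ j := by
  rintro rfl
  simp [G.irrefl] at h

def twoTwoGraph (c : Fin K) : SimpleGraph (Fin N) where
  Adj i j := IsMColor G i 2 ∧ IsMColor G j 2 ∧ G.t i j = some c
  symm := ⟨fun _ _ h => ⟨h.2.1, h.1, (G.symm _ _).trans h.2.2⟩⟩
  loopless := ⟨fun _ h => G.ne_of_t_eq_some h.2.2 rfl⟩

noncomputable def componentRep (c : Fin K) (i : Fin N) : Fin N :=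
  ((G.twoTwoGraph c).connectedComponentMk i).out

lemma reachable_componentRep (c : Fin K) (i : Fin N) :
    (G.twoTwoGraph c).Reachable i (G.componentRep c i) :=
  SimpleGraph.ConnectedComponent.exact (Quot.out_eq _).symm

variable {G}

lemma componentRep_eq_iff {c : Fin K} {i j : Fin N} :
    G.componentRep c i = G.componentRep c j ↔ (G.twoTwoGraph c).Reachable i j := by
  refine ⟨fun h => ?_, fun h => ?_⟩
  · exact (G.reachable_componentRep c i).trans (h ▸ (G.reachable_componentRep c j).symm)
  · rw [componentRep, componentRep, SimpleGraph.ConnectedComponent.sound h]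

lemma componentRep_eq_self {c : Fin K} {i : Fin N} (h : ∀ j, ¬ (G.twoTwoGraph c).Adj i j) :
    G.componentRep c i = i := by
  by_contra hne
  obtain ⟨p⟩ := G.reachable_componentRep c i
  exact h _ (p.adj_snd (SimpleGraph.Walk.not_nil_of_ne (Ne.symm hne)))

variable (G) in
def support : Set (Fin N) := {i | ∃ j, G.t i j ≠ none}

lemma mem_support_of_t_eq_some {i j : Fin N} {k : Fin K} (h : G.t i j = some k) :
    i ∈ G.support :=
  ⟨j, by simp [h]⟩

lemma componentRep_mem_support {c : Fin K} {i : Fin N} (hi : i ∈ G.support) :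
    G.componentRep c i ∈ G.support := by
  by_cases heq : G.componentRep c i = i
  · rwa [heq]
  obtain ⟨p⟩ := (G.reachable_componentRep c i).symm
  exact mem_support_of_t_eq_some (p.adj_snd (SimpleGraph.Walk.not_nil_of_ne heq)).2.2

lemma isPath_getVert {c : Fin K} {i j : Fin N} {p : (G.twoTwoGraph c).Walk i j}
    (hp : p.IsPath) (hlen : 1 ≤ p.length) :
    IsPath G c p.length (fun q => p.getVert q) := by
  refine ⟨hlen, fun q => (p.adj_getVert_succ q.isLt).2.2, fun q r hqr => ?_⟩
  have hinj {m n : ℕ} (hm : m ≤ p.length) (hn : n ≤ p.length)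
      (h : p.getVert m = p.getVert n) : m = n := hp.getVert_injOn hm hn h
  simp only [Fin.val_castSucc, Fin.val_succ, Sym2.eq_iff] at hqr
  rcases hqr with ⟨h0, -⟩ | ⟨h0, h1⟩
  · exact Fin.ext (hinj (by omega) (by omega) h0)
  · have := hinj (by omega) (by omega) h0
    have := hinj (by omega) (by omega) h1
    omega

variable (G) in
def ResidingPathsMeetOneColor : Prop :=
  ∀ i j k, G.t i j = some k → ∀ k', k' ≠ k →
    ∀ P (v : Fin (P + 1) → Fin N), IsPath G k' P v →
      v 0 = i → v (Fin.last P) = j → ∃ q : Fin (P + 1), IsMColor G (v q) 1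

/-- A `W_c`-path between the ends through `2`-color nodes would be a residing path of the edge
without a `1`-color node. -/
lemma componentRep_ne (hres : G.ResidingPathsMeetOneColor) {i j : Fin N} {k c : Fin K}
    (hij : G.t i j = some k) (hj : IsMColor G j 2) (hc : c ≠ k) :
    G.componentRep c i ≠ G.componentRep c j := by
  intro hrep
  obtain ⟨p, hp⟩ := (componentRep_eq_iff.mp hrep).exists_isPath
  have hlen : 1 ≤ p.length := by
    by_contra! h0
    exact G.ne_of_t_eq_some hij (p.eq_of_length_eq_zero (by omega))
  obtain ⟨q, hq⟩ := hres i j k hij c hc _ _ (isPath_getVert hp hlen) (by simp)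
    (by simp [p.getVert_length])
  have htwo : IsMColor G (p.getVert q) 2 := by
    rcases Nat.lt_or_ge q p.length with hlt | hge
    · exact (p.adj_getVert_succ hlt).1
    · rw [p.getVert_of_length_le hge]
      exact hj
  rw [IsMColor] at hq htwo
  omega

lemma mem_colorSet {i j : Fin N} {k : Fin K} (h : G.t i j = some k) : k ∈ colorSet G i :=
  ⟨j, h⟩

lemma one_le_ncard_colorSet {i j : Fin N} {k : Fin K} (h : G.t i j = some k) :
    1 ≤ (colorSet G i).ncard :=
  (Set.ncard_pos (Set.toFinite _)).mpr ⟨k, mem_colorSet h⟩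

variable (G) in
noncomputable def otherColor (i : Fin N) (k : Fin K) : Fin K :=
  open Classical in if h : ∃ c ∈ colorSet G i, c ≠ k then h.choose else k

section otherColor

variable {i : Fin N} {k c : Fin K} (hi : IsMColor G i 2) (hk : k ∈ colorSet G i)
include hi hk

lemma colorSet_eq_pair : colorSet G i = {k, G.otherColor i k} := by
  obtain ⟨a, b, hab, hset⟩ := Set.ncard_eq_two.mp hi
  have hex : ∃ c ∈ colorSet G i, c ≠ k := by
    rw [hset] at hk ⊢
    rcases hk with rfl | rfl
    exacts [⟨b, by simp, hab.symm⟩, ⟨a, by simp, hab⟩]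
  obtain ⟨hmem, hne⟩ := hex.choose_spec
  rw [otherColor, dif_pos hex]
  generalize hex.choose = c at hmem hne ⊢
  rw [hset] at hk hmem ⊢
  aesop

lemma otherColor_ne : G.otherColor i k ≠ k := by
  intro h
  have := colorSet_eq_pair hi hk
  rw [h, Set.pair_eq_singleton] at this
  simp [IsMColor, this] at hi

lemma otherColor_mem : G.otherColor i k ∈ colorSet G i := by
  rw [colorSet_eq_pair hi hk]; simp

lemma eq_otherColor (hc : c ∈ colorSet G i) (hck : c ≠ k) : c = G.otherColor i k := by
  rw [colorSet_eq_pair hi hk] at hc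
  simpa [hck] using hc

lemma otherColor_otherColor : G.otherColor i (G.otherColor i k) = k :=
  (eq_otherColor hi (otherColor_mem hi hk) hk (otherColor_ne hi hk).symm).symm

end otherColor

/-- A color `k` for which `i` is `W_k`-special. -/
noncomputable def lightColor {i : Fin N} (hs : IsSpecial2Color G i) : Fin K :=
  hs.2.choose

lemma lightColor_mem {i : Fin N} (hs : IsSpecial2Color G i) : lightColor hs ∈ colorSet G i :=
  hs.2.choose_spec.1

lemma isMColor_one_of_lightColor {i j : Fin N} (hs : IsSpecial2Color G i)
    (hij : G.t i j = some (lightColor hs)) : IsMColor G j 1 :=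
  hs.2.choose_spec.2 j hij

lemma ne_lightColor {i j : Fin N} {k : Fin K} (hs : IsSpecial2Color G i)
    (hij : G.t i j = some k) (hj : IsMColor G j 2) : k ≠ lightColor hs := by
  rintro rfl
  have := isMColor_one_of_lightColor hs hij
  rw [IsMColor] at this hj
  omega

lemma otherColor_eq_lightColor {i : Fin N} {k : Fin K} (hs : IsSpecial2Color G i)
    (hk : k ∈ colorSet G i) (hkl : k ≠ lightColor hs) : G.otherColor i k = lightColor hs :=
  (eq_otherColor hs.1 hk (lightColor_mem hs) hkl.symm).symm

lemma componentRep_otherColor_of_special {i : Fin N} {k : Fin K} (hs : IsSpecial2Color G i)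
    (hk : k ∈ colorSet G i) (hkl : k ≠ lightColor hs) :
    G.componentRep (G.otherColor i k) i = i := by
  rw [otherColor_eq_lightColor hs hk hkl]
  exact componentRep_eq_self fun j hj => ne_lightColor hs hj.2.2 hj.2.1 rfl

variable (G) in
def darts : Finset (Fin N × Fin N) := {d | G.t d.1 d.2 ≠ none}

variable (G) in
lemma card_darts_le : #G.darts ≤ 2 * edgeCount G := by
  have hE : {e : Sym2 (Fin N) | ∃ i j, e = s(i, j) ∧ G.t i j ≠ none} =
      ↑(G.darts.image fun d => s(d.1, d.2)) := by
    ext e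
    simp [darts, and_comm, eq_comm]
  rw [edgeCount, hE, Set.ncard_coe_finset]
  refine card_le_mul_card_image _ 2 fun e _ => ?_
  induction e using Sym2.ind with
  | _ u v =>
    refine (card_le_card fun d hd => ?_).trans (card_le_two (a := (u, v)) (b := (v, u)))
    obtain ⟨x, y⟩ := d
    simp only [mem_filter, Sym2.eq_iff] at hd
    rcases hd.2 with h | h <;> simp [h]

variable (G) in
lemma ncard_support_le : G.support.ncard ≤ 2 * edgeCount G := by
  have : G.support = ↑(G.darts.image Prod.fst) := by
    ext i
    simp [support, darts]
  rw [this, Set.ncard_coe_finset]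
  exact card_image_le.trans G.card_darts_le

section code

open Matrix

variable {F : Type*} [Field F] (a : Fin N → F)

variable (G)

noncomputable def sideCoeff (i : Fin N) (k : Fin K) : F :=
  a (G.componentRep (G.otherColor i k) i)

noncomputable def mixedForm (i : Fin N) (k : Fin K) (x : Fin 4 → F) : F :=
  x 0 + a i * x 1 + G.sideCoeff a i k * x 2 + a i * G.sideCoeff a i k * x 3

open Classical in
noncomputable def codingMatrix (i : Fin N) (k : Fin K) : Matrix (Fin 3) (Fin 4) F :=
  let α := a i
  let Λ := G.sideCoeff a i k
  if k ∉ colorSet G i then 0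
  else if IsMColor G i 1 then !![0, 1, 0, 0; 0, 0, 1, 0; 1, 0, 0, α]
  else if IsMColor G i 2 then
    if hs : IsSpecial2Color G i then
      if k = lightColor hs then !![0, 0, 0, 0; 0, 0, 0, 0; 1, α, Λ, α * Λ]
      else !![1, 0, α, 0; 0, 1, 0, α; 0, 0, 0, 0]
    else if k < G.otherColor i k then !![1, α, Λ, α * Λ; 0, 0, 0, 0; 0, 1, 0, Λ]
    else !![0, 0, 0, 0; 1, α, Λ, α * Λ; 0, -1, 0, -Λ]
  else Matrix.of fun r =>
    if (r : ℕ) = (colorSet G i ∩ Set.Iio k).ncard then ![1, 0, 0, α] else 0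

noncomputable def encode (i : Fin N) : (Fin K → Fin 4 → F) →ₗ[F] Fin 3 → F :=
  ∑ k, (G.codingMatrix a i k).mulVecLin ∘ₗ LinearMap.proj k

variable {G a}

lemma encode_apply (i : Fin N) (w : Fin K → Fin 4 → F) :
    G.encode a i w = ∑ k, G.codingMatrix a i k *ᵥ w k := by
  simp [encode]

lemma codingMatrix_of_notMem {i : Fin N} {k : Fin K} (hk : k ∉ colorSet G i) :
    G.codingMatrix a i k = 0 := by
  simp [codingMatrix, hk]

section nodeEquations

variable {i : Fin N} {k : Fin K} {w : Fin K → Fin 4 → F}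

lemma eqns_of_isMColor_one (hi : IsMColor G i 1) (hk : k ∈ colorSet G i)
    (hw : G.encode a i w = 0) : w k 1 = 0 ∧ w k 2 = 0 ∧ w k 0 + a i * w k 3 = 0 := by
  have hsingle : colorSet G i = {k} := by
    obtain ⟨c, hc⟩ := Set.ncard_eq_one.mp hi
    rw [hc] at hk ⊢
    rw [hk]
  rw [encode_apply, Fintype.sum_eq_single k fun c hc => by
    rw [codingMatrix_of_notMem (by simpa [hsingle] using hc), zero_mulVec]] at hw
  simp only [codingMatrix, hk, not_true_eq_false, if_false, hi, if_true] at hw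
  refine ⟨?_, ?_, ?_⟩
  · simpa [mulVec, dotProduct, Fin.sum_univ_four] using congrFun hw 0
  · simpa [mulVec, dotProduct, Fin.sum_univ_four] using congrFun hw 1
  · simpa [mulVec, dotProduct, Fin.sum_univ_four] using congrFun hw 2

lemma encode_of_isMColor_two (hi : IsMColor G i 2) (hk : k ∈ colorSet G i)
    (w : Fin K → Fin 4 → F) :
    G.encode a i w = G.codingMatrix a i k *ᵥ w k +
      G.codingMatrix a i (G.otherColor i k) *ᵥ w (G.otherColor i k) := by
  rw [encode_apply, Fintype.sum_eq_add _ _ (otherColor_ne hi hk).symm fun c hc => by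
    rw [codingMatrix_of_notMem (by simpa [colorSet_eq_pair hi hk] using hc), zero_mulVec]]

section twoColor

variable (hi : IsMColor G i 2) (hk : k ∈ colorSet G i)
include hi hk

lemma codingMatrix_of_eq_lightColor (hs : IsSpecial2Color G i) (hkl : k = lightColor hs) :
    G.codingMatrix a i k = !![0, 0, 0, 0; 0, 0, 0, 0;
      1, a i, G.sideCoeff a i k, a i * G.sideCoeff a i k] := by
  have h1 : ¬ IsMColor G i 1 := by rw [IsMColor] at *; omega
  subst hkl
  simp [codingMatrix, hk, h1, hi, hs]

lemma codingMatrix_of_ne_lightColor (hs : IsSpecial2Color G i) (hkl : k ≠ lightColor hs) :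
    G.codingMatrix a i k = !![1, 0, a i, 0; 0, 1, 0, a i; 0, 0, 0, 0] := by
  have h1 : ¬ IsMColor G i 1 := by rw [IsMColor] at *; omega
  simp [codingMatrix, hk, h1, hi, hs, hkl]

lemma codingMatrix_of_lt (hs : ¬ IsSpecial2Color G i) (hlt : k < G.otherColor i k) :
    G.codingMatrix a i k = !![1, a i, G.sideCoeff a i k, a i * G.sideCoeff a i k;
      0, 0, 0, 0; 0, 1, 0, G.sideCoeff a i k] := by
  have h1 : ¬ IsMColor G i 1 := by rw [IsMColor] at *; omega
  simp [codingMatrix, hk, h1, hi, hs, hlt]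

lemma codingMatrix_of_not_lt (hs : ¬ IsSpecial2Color G i) (hlt : ¬ k < G.otherColor i k) :
    G.codingMatrix a i k = !![0, 0, 0, 0; 1, a i, G.sideCoeff a i k, a i * G.sideCoeff a i k;
      0, -1, 0, -G.sideCoeff a i k] := by
  have h1 : ¬ IsMColor G i 1 := by rw [IsMColor] at *; omega
  simp [codingMatrix, hk, h1, hi, hs, hlt]

lemma eqns_of_ne_lightColor (hs : IsSpecial2Color G i) (hkl : k ≠ lightColor hs)
    (hw : G.encode a i w = 0) : w k 0 + a i * w k 2 = 0 ∧ w k 1 + a i * w k 3 = 0 := by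
  rw [encode_of_isMColor_two hi hk, codingMatrix_of_ne_lightColor hi hk hs hkl,
    codingMatrix_of_eq_lightColor hi (otherColor_mem hi hk) hs
      (otherColor_eq_lightColor hs hk hkl)] at hw
  constructor
  · simpa [mulVec, dotProduct, Fin.sum_univ_four] using congrFun hw 0
  · simpa [mulVec, dotProduct, Fin.sum_univ_four] using congrFun hw 1

lemma mixedForm_eq_zero (hkl : ∀ hs : IsSpecial2Color G i, k = lightColor hs)
    (hw : G.encode a i w = 0) : G.mixedForm a i k (w k) = 0 := by
  have hk' := otherColor_mem hi hk
  have hne := otherColor_ne hi hk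
  rw [encode_of_isMColor_two hi hk] at hw
  by_cases hs : IsSpecial2Color G i
  · rw [codingMatrix_of_eq_lightColor hi hk hs (hkl hs),
      codingMatrix_of_ne_lightColor hi hk' hs (hkl hs ▸ hne)] at hw
    simpa [mulVec, dotProduct, Fin.sum_univ_four, mixedForm] using congrFun hw 2
  · by_cases hlt : k < G.otherColor i k
    · rw [codingMatrix_of_lt hi hk hs hlt, codingMatrix_of_not_lt hi hk' hs
        (by rw [otherColor_otherColor hi hk]; exact hlt.not_gt)] at hw
      simpa [mulVec, dotProduct, Fin.sum_univ_four, mixedForm] using congrFun hw 0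
    · rw [codingMatrix_of_not_lt hi hk hs hlt, codingMatrix_of_lt hi hk' hs
        (by rw [otherColor_otherColor hi hk]; exact lt_of_le_of_ne (not_lt.mp hlt) hne)] at hw
      simpa [mulVec, dotProduct, Fin.sum_univ_four, mixedForm] using congrFun hw 1

lemma eq_of_not_isSpecial2Color (hs : ¬ IsSpecial2Color G i) (hw : G.encode a i w = 0) :
    w k 1 + G.sideCoeff a i k * w k 3 =
      w (G.otherColor i k) 1 + G.sideCoeff a i (G.otherColor i k) * w (G.otherColor i k) 3 := by
  have hk' := otherColor_mem hi hk
  rw [encode_of_isMColor_two hi hk] at hw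
  by_cases hlt : k < G.otherColor i k
  · rw [codingMatrix_of_lt hi hk hs hlt, codingMatrix_of_not_lt hi hk' hs
      (by rw [otherColor_otherColor hi hk]; exact hlt.not_gt)] at hw
    have := congrFun hw 2
    simp [dotProduct, Fin.sum_univ_four] at this
    linear_combination this
  · rw [codingMatrix_of_not_lt hi hk hs hlt, codingMatrix_of_lt hi hk' hs
      (by rw [otherColor_otherColor hi hk]
          exact lt_of_le_of_ne (not_lt.mp hlt) (otherColor_ne hi hk))] at hw
    have := congrFun hw 2
    simp [dotProduct, Fin.sum_univ_four] at this
    linear_combination -this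

end twoColor

lemma eq_of_isMColor_three (hi : IsMColor G i 3) (hk : k ∈ colorSet G i)
    (hw : G.encode a i w = 0) : w k 0 + a i * w k 3 = 0 := by
  have hfin : (colorSet G i).Finite := Set.toFinite _
  have h12 : ¬ IsMColor G i 1 ∧ ¬ IsMColor G i 2 := by unfold IsMColor at hi ⊢; omega
  have hslot := congrFun hw ⟨_, hi ▸ ncard_inter_Iio_lt_ncard hfin hk⟩
  rw [encode_apply, Finset.sum_apply, Fintype.sum_eq_single k fun c hck => ?_] at hslot
  · simpa [codingMatrix, hk, h12, mulVec, dotProduct, Fin.sum_univ_four] using hslot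
  by_cases hc : c ∈ colorSet G i
  · have hrank := ((strictMonoOn_ncard_inter_Iio hfin).injOn.ne hc hk hck)
    simp [codingMatrix, hc, h12, mulVec, dotProduct, hrank.symm]
  · simp [codingMatrix_of_notMem hc]

end nodeEquations

variable (G) in
structure IsAdmissible (a : Fin N → F) : Prop where
  injOn : Set.InjOn a G.support
  ne_zero : ∀ i ∈ G.support, a i ≠ 0
  mul_sideCoeff_ne : ∀ i j k, G.t i j = some k → a i * G.sideCoeff a i k ≠ a j

lemma IsAdmissible.ne {i j : Fin N} {k : Fin K} (ha : G.IsAdmissible a)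
    (hij : G.t i j = some k) : a i ≠ a j := fun h =>
  G.ne_of_t_eq_some hij <| ha.injOn (mem_support_of_t_eq_some hij)
    (mem_support_of_t_eq_some ((G.symm j i).trans hij)) h

variable {i j : Fin N} {k : Fin K} {w : Fin K → Fin 4 → F}

lemma exists_relation_of_isMColor_two (ha : G.IsAdmissible a) (hij : G.t i j = some k)
    (hi : IsMColor G i 2) (hVi : G.encode a i w = 0) (h1 : w k 1 = 0) (h2 : w k 2 = 0) :
    ∃ β ≠ a j, w k 0 + β * w k 3 = 0 := by
  have hk := mem_colorSet hij
  by_cases hkl : ∃ hs : IsSpecial2Color G i, k ≠ lightColor hs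
  · obtain ⟨hs, hkl⟩ := hkl
    obtain ⟨h0, -⟩ := eqns_of_ne_lightColor hi hk hs hkl hVi
    refine ⟨0, (ha.ne_zero j (mem_support_of_t_eq_some ((G.symm j i).trans hij))).symm, ?_⟩
    simpa [h2] using h0
  · push Not at hkl
    have hm := mixedForm_eq_zero hi hk hkl hVi
    refine ⟨a i * G.sideCoeff a i k, ha.mul_sideCoeff_ne i j k hij, ?_⟩
    simp only [mixedForm, h1, h2] at hm
    linear_combination hm

lemma eq_zero_of_isMColor_one (h1 : ¬ ∃ i, 4 ≤ (colorSet G i).ncard) (ha : G.IsAdmissible a)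
    (hij : G.t i j = some k) (hi : IsMColor G i 1) (hVi : G.encode a i w = 0)
    (hVj : G.encode a j w = 0) : w k = 0 := by
  have hji := (G.symm j i).trans hij
  have hk := mem_colorSet hji
  obtain ⟨hx1, hx2, hα⟩ := eqns_of_isMColor_one hi (mem_colorSet hij) hVi
  suffices ∃ β ≠ a i, w k 0 + β * w k 3 = 0 by
    obtain ⟨β, hne, hβ⟩ := this
    exact fin4_eq_zero_of_add_mul_eq_zero hx1 hx2 hα hβ hne.symm
  have := one_le_ncard_colorSet hji
  have : (colorSet G j).ncard < 4 := by by_contra! h; exact h1 ⟨j, h⟩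
  obtain hj | hj | hj : IsMColor G j 1 ∨ IsMColor G j 2 ∨ IsMColor G j 3 := by
    unfold IsMColor; omega
  · exact ⟨a j, ha.ne hji, (eqns_of_isMColor_one hj hk hVj).2.2⟩
  · exact exists_relation_of_isMColor_two ha hji hj hVj hx1 hx2
  · exact ⟨a j, ha.ne hji, eq_of_isMColor_three hj hk hVj⟩

section twoTwo

variable (h3 : ¬ ∃ i j, IsNormal2Color G i ∧ G.t i j ≠ none ∧ IsMColor G j 2 ∧
      colorSet G i ≠ colorSet G j)
include h3

lemma colorSet_eq_of_not_isSpecial2Color (hij : G.t i j = some k) (hi : IsMColor G i 2)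
    (hs : ¬ IsSpecial2Color G i) (hj : IsMColor G j 2) : colorSet G i = colorSet G j := by
  by_contra hne
  exact h3 ⟨i, j, ⟨hi, hs⟩, by simp [hij], hj, hne⟩

lemma otherColor_eq_of_not_isSpecial2Color (hij : G.t i j = some k) (hi : IsMColor G i 2)
    (hs : ¬ IsSpecial2Color G i) (hj : IsMColor G j 2) :
    G.otherColor j k = G.otherColor i k := by
  have hset := colorSet_eq_of_not_isSpecial2Color h3 hij hi hs hj
  have hk := mem_colorSet hij
  exact (eq_otherColor hj (hset ▸ hk) (hset ▸ otherColor_mem hi hk) (otherColor_ne hi hk)).symm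

/-- At a normal end, the mixed forms of the other color `k'` are stored at both ends with the same
`Λ_{·,k'}` (the ends are adjacent in the `k`-graph) but different `a`, which isolates
`x₁ + Λ_{i,k} x₃`. -/
lemma pencil_eq_zero (ha : G.IsAdmissible a) (hij : G.t i j = some k) (hi : IsMColor G i 2)
    (hj : IsMColor G j 2) (hVi : G.encode a i w = 0) (hVj : G.encode a j w = 0) :
    w k 0 + G.sideCoeff a i k * w k 2 = 0 ∧ w k 1 + G.sideCoeff a i k * w k 3 = 0 := by
  have hji := (G.symm j i).trans hij
  have hk := mem_colorSet hij
  by_cases hs : IsSpecial2Color G i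
  · have hkl := ne_lightColor hs hij hj
    rw [sideCoeff, componentRep_otherColor_of_special hs hk hkl]
    exact eqns_of_ne_lightColor hi hk hs hkl hVi
  obtain ⟨k', hk'⟩ : ∃ k', G.otherColor i k = k' := ⟨_, rfl⟩
  have hk'i : k' ∈ colorSet G i := hk' ▸ otherColor_mem hi hk
  have hjk : G.otherColor j k = k' := hk' ▸ otherColor_eq_of_not_isSpecial2Color h3 hij hi hs hj
  have hk'j : k' ∈ colorSet G j := hjk ▸ otherColor_mem hj (mem_colorSet hji)
  have hμ : G.sideCoeff a j k' = G.sideCoeff a i k' := by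
    have hjk' : G.otherColor j k' = k := hjk ▸ otherColor_otherColor hj (mem_colorSet hji)
    have hik' : G.otherColor i k' = k := hk' ▸ otherColor_otherColor hi hk
    rw [sideCoeff, sideCoeff, hjk', hik']
    exact congrArg a (componentRep_eq_iff.mpr (SimpleGraph.Adj.reachable ⟨hj, hi, hji⟩))
  have hmi := mixedForm_eq_zero hi hk'i (fun hs' => absurd hs' hs) hVi
  have hmj := mixedForm_eq_zero hj hk'j
    (fun hs' => hjk ▸ otherColor_eq_lightColor hs' (mem_colorSet hji) (ne_lightColor hs' hji hi))
    hVj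
  have hY : w k' 1 + G.sideCoeff a i k' * w k' 3 = 0 := by
    simp only [mixedForm, hμ] at hmi hmj
    refine (mul_eq_zero.mp (?_ : (a i - a j) * _ = 0)).resolve_left
      (sub_ne_zero.mpr (ha.ne hij))
    linear_combination hmi - hmj
  have hrow := eq_of_not_isSpecial2Color hi hk hs hVi
  have hmk := mixedForm_eq_zero hi hk (fun hs' => absurd hs' hs) hVi
  rw [hk', hY] at hrow
  simp only [mixedForm] at hmk
  exact ⟨by linear_combination hmk - a i * hrow, hrow⟩

lemma sideCoeff_ne (hres : G.ResidingPathsMeetOneColor) (ha : G.IsAdmissible a)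
    (hij : G.t i j = some k) (hi : IsMColor G i 2) (hj : IsMColor G j 2) :
    G.sideCoeff a i k ≠ G.sideCoeff a j k := by
  have hji := (G.symm j i).trans hij
  have hk := mem_colorSet hij
  intro h
  refine absurd (ha.injOn (componentRep_mem_support (mem_support_of_t_eq_some hij))
    (componentRep_mem_support (mem_support_of_t_eq_some hji)) h) ?_
  by_cases hs : IsSpecial2Color G i ∧ IsSpecial2Color G j
  · rw [componentRep_otherColor_of_special hs.1 hk (ne_lightColor hs.1 hij hj),
      componentRep_otherColor_of_special hs.2 (mem_colorSet hji) (ne_lightColor hs.2 hji hi)]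
    exact G.ne_of_t_eq_some hij
  · have hjk : G.otherColor j k = G.otherColor i k := by
      rcases not_and_or.mp hs with hs | hs
      · exact otherColor_eq_of_not_isSpecial2Color h3 hij hi hs hj
      · exact (otherColor_eq_of_not_isSpecial2Color h3 hji hj hs hi).symm
    rw [hjk]
    exact componentRep_ne hres hij hj (otherColor_ne hi hk)

end twoTwo

theorem eq_zero_of_encode_eq_zero (h1 : ¬ ∃ i, 4 ≤ (colorSet G i).ncard)
    (h2 : ¬ ∃ i j, IsMColor G i 3 ∧ G.t i j ≠ none ∧ 2 ≤ (colorSet G j).ncard)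
    (h3 : ¬ ∃ i j, IsNormal2Color G i ∧ G.t i j ≠ none ∧ IsMColor G j 2 ∧
      colorSet G i ≠ colorSet G j)
    (hres : G.ResidingPathsMeetOneColor)
    (ha : G.IsAdmissible a) (hij : G.t i j = some k) (hVi : G.encode a i w = 0)
    (hVj : G.encode a j w = 0) : w k = 0 := by
  have hji := (G.symm j i).trans hij
  by_cases hi1 : IsMColor G i 1
  · exact eq_zero_of_isMColor_one h1 ha hij hi1 hVi hVj
  by_cases hj1 : IsMColor G j 1
  · exact eq_zero_of_isMColor_one h1 ha hji hj1 hVj hVi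
  have two_of_ne_one {x y : Fin N} (hxy : G.t x y = some k) (hx1 : ¬ IsMColor G x 1)
      (hy1 : ¬ IsMColor G y 1) : IsMColor G x 2 := by
    have := one_le_ncard_colorSet hxy
    have := one_le_ncard_colorSet ((G.symm y x).trans hxy)
    have : (colorSet G x).ncard < 4 := by by_contra! h; exact h1 ⟨x, h⟩
    unfold IsMColor at *
    by_contra hx2
    exact h2 ⟨x, y, by omega, by simp [hxy], by omega⟩
  have hi := two_of_ne_one hij hi1 hj1
  have hj := two_of_ne_one hji hj1 hi1
  obtain ⟨hi₀, hi₁⟩ := pencil_eq_zero h3 ha hij hi hj hVi hVj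
  obtain ⟨hj₀, hj₁⟩ := pencil_eq_zero h3 ha hji hj hi hVj hVi
  exact fin4_eq_zero_of_pencil hi₀ hi₁ hj₀ hj₁ (sideCoeff_ne h3 hres ha hij hi hj)

variable (G) in
/-- `a = θ f` with `f` injective and nonzero on the support and `θ` avoiding `0` and the
`≤ 2|E|` values `f_j / (f_i f_{rep})`. -/
theorem exists_isAdmissible [Fintype F]
    (hF : 2 * edgeCount G + 1 < Fintype.card F) : ∃ a : Fin N → F, G.IsAdmissible a := by
  classical
  obtain ⟨f, hf, hf0⟩ := (Set.toFinite G.support).exists_injOn_ne_zero (F := F)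
    (G.ncard_support_le.trans_lt (by rw [Nat.card_eq_fintype_card]; omega))
  let vals : Finset F := G.darts.image fun d => (G.t d.1 d.2).elim 0 fun k =>
    f d.2 / (f d.1 * f (G.componentRep (G.otherColor d.1 k) d.1))
  have hvals : #vals ≤ 2 * edgeCount G := card_image_le.trans G.card_darts_le
  have hbad : #(insert 0 vals) < #(univ : Finset F) := by
    rw [card_univ]
    exact (card_insert_le _ _).trans_lt (by omega)
  obtain ⟨θ, -, hθ⟩ := exists_mem_notMem_of_card_lt_card hbad
  have hθ0 : θ ≠ 0 := fun h => hθ (by simp [h])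
  refine ⟨fun i => θ * f i, fun i hi j hj h => hf hi hj (mul_left_cancel₀ hθ0 h),
    fun i hi => mul_ne_zero hθ0 (hf0 i hi), fun i j k hij h => hθ ?_⟩
  have hi := mem_support_of_t_eq_some hij
  have hr := hf0 _ (componentRep_mem_support (c := G.otherColor i k) hi)
  refine mem_insert_of_mem (mem_image.mpr ⟨(i, j), by simp [darts, hij], ?_⟩)
  simp only [hij, Option.elim_some]
  rw [div_eq_iff (mul_ne_zero (hf0 i hi) hr)]
  rw [sideCoeff] at h
  exact mul_left_cancel₀ hθ0 (by linear_combination -h)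

end code

end LabeledGraph

/-- for arbitrary `K`, if the graph contains no `M`-color node with
`M ≥ 4`, no `3`-color node adjacent to a node carrying at least `2` labels, no normal
`2`-color node adjacent to a `2`-color node with a different color set, and every
residing path of every internal edge contains a `1`-color node, then for every prime
`p > 4|E|` there is a storage code with `S = (Fin 4 → ZMod p)`, `T = (Fin 3 → ZMod p)`,
i.e. rate `4/3` is achievable. -/
theorem rate_four_thirds_achievable_general {N K : ℕ} (G : LabeledGraph N K)
    (h1 : ¬ ∃ i, 4 ≤ (colorSet G i).ncard)
    (h2 : ¬ ∃ i j, IsMColor G i 3 ∧ G.t i j ≠ none ∧ 2 ≤ (colorSet G j).ncard)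
    (h3 : ¬ ∃ i j, IsNormal2Color G i ∧ G.t i j ≠ none ∧ IsMColor G j 2 ∧
      colorSet G i ≠ colorSet G j)
    (hres : ∀ i j k, G.t i j = some k → ∀ k', k' ≠ k →
      ∀ P (v : Fin (P + 1) → Fin N), IsPath G k' P v →
        v 0 = i → v (Fin.last P) = j → ∃ q : Fin (P + 1), IsMColor G (v q) 1)
    (p : ℕ) (hp : p.Prime) (hpE : 4 * edgeCount G < p) :
    ∃ V : Fin N → (Fin K → (Fin 4 → ZMod p)) → (Fin 3 → ZMod p),
      IsStorageCode G (Fin 4 → ZMod p) (Fin 3 → ZMod p) V := by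
  have : Fact p.Prime := ⟨hp⟩
  obtain ⟨a, ha⟩ := G.exists_isAdmissible (F := ZMod p)
    (by rw [ZMod.card]; have := hp.two_le; omega)
  exact ⟨fun i => G.encode a i, isStorageCode_of_ker G (fun i => (G.encode a i).toAddMonoidHom)
    fun _ _ _ hij _ => LabeledGraph.eq_zero_of_encode_eq_zero h1 h2 h3 hres ha hij⟩
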